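/- If Ẑ₁ ↔ U ↔ Ẑ₂ is a Markov chain (i.e., Ẑ₁ and Ẑ₂ are conditionally independent given U) and (X₁,X₂) ↔ (Ẑ₁,Ẑ₂) ↔ U is a Markov chain, then I(X₁,X₂; Ẑ₁; Ẑ₂) ≤ I(X₁,X₂; U), where I(·;·;·) denotes interaction information. -/

import Mathlib

open scoped BigOperators

noncomputable section

namespace GW

variable {Ω : Type*} [Fintype Ω]

/-- Probability P[X = x] under a weight function `p` on a finite sample space. -/
def pr {α : Type*} (p : Ω → ℝ) (X : Ω → α) (x : α) : ℝ :=
  ∑ ω, Set.indicator {ω' | X ω' = x} p ω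

/-- `p` is a probability mass function on the sample space. -/
def IsProb (p : Ω → ℝ) : Prop := (∀ ω, 0 ≤ p ω) ∧ ∑ ω, p ω = 1

/-- The paired random variable (X, Y). -/
def pair {α β : Type*} (X : Ω → α) (Y : Ω → β) : Ω → α × β := fun ω => (X ω, Y ω)

/-- Mutual information I(X;Y). -/
def mi {α β : Type*} [Fintype α] [Fintype β] (p : Ω → ℝ) (X : Ω → α) (Y : Ω → β) : ℝ :=
  ∑ x, ∑ y, pr p (pair X Y) (x, y) *
    Real.log (pr p (pair X Y) (x, y) / (pr p X x * pr p Y y))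

/-- Conditional mutual information I(X;Y|Z). -/
def cmi {α β γ : Type*} [Fintype α] [Fintype β] [Fintype γ]
    (p : Ω → ℝ) (X : Ω → α) (Y : Ω → β) (Z : Ω → γ) : ℝ :=
  ∑ x, ∑ y, ∑ z,
    pr p (pair X (pair Y Z)) (x, y, z) *
      Real.log (pr p (pair X (pair Y Z)) (x, y, z) * pr p Z z /
        (pr p (pair X Z) (x, z) * pr p (pair Y Z) (y, z)))

/-- Interaction information I(X;Y;Z) = I(X;Y) - I(X;Y|Z). -/
def ii {α β γ : Type*} [Fintype α] [Fintype β] [Fintype γ]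
    (p : Ω → ℝ) (X : Ω → α) (Y : Ω → β) (Z : Ω → γ) : ℝ :=
  mi p X Y - cmi p X Y Z

/-- Conditional interaction information I(X;Y;Z|W) = I(X;Y|W) - I(X;Y|Z,W). -/
def cii {α β γ δ : Type*} [Fintype α] [Fintype β] [Fintype γ] [Fintype δ]
    (p : Ω → ℝ) (X : Ω → α) (Y : Ω → β) (Z : Ω → γ) (W : Ω → δ) : ℝ :=
  cmi p X Y W - cmi p X Y (pair Z W)

/-- Shannon entropy H(X). -/
def ent {α : Type*} [Fintype α] (p : Ω → ℝ) (X : Ω → α) : ℝ :=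
  - ∑ x, pr p X x * Real.log (pr p X x)

/-- Conditional entropy H(Y|X). -/
def condEnt {α β : Type*} [Fintype α] [Fintype β] (p : Ω → ℝ) (Y : Ω → β) (X : Ω → α) : ℝ :=
  - ∑ x, ∑ y, pr p (pair X Y) (x, y) * Real.log (pr p (pair X Y) (x, y) / pr p X x)

/-- Conditional independence A ⊥ B | C (i.e. the Markov chain A ↔ C ↔ B). -/
def CondIndep {α β γ : Type*} (p : Ω → ℝ) (A : Ω → α) (B : Ω → β) (C : Ω → γ) : Prop :=
  ∀ a b c, pr p (pair A (pair B C)) (a, b, c) * pr p C c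
    = pr p (pair A C) (a, c) * pr p (pair B C) (b, c)


/-!
Write every information quantity through entropies and set `A = (X₁, X₂)`. The chain rule gives
`I(A;U) + I(A;Ẑ₁|Ẑ₂) + I(A;U|Ẑ₁,Ẑ₂) + I(Ẑ₁;Ẑ₂|U) = I(A;Ẑ₁) + I(A;U|Ẑ₁) + I(A;U|Ẑ₂) + I(Ẑ₁;Ẑ₂|A,U)`.
The two Markov conditions make the last two terms on the left vanish, and the three conditional
mutual informations on the right are nonnegative by Gibbs' inequality.
-/

lemma sub_le_mul_log_div {u v : ℝ} (hu : 0 ≤ u) (hv : 0 ≤ v) (huv : 0 < u → 0 < v) :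
    u - v ≤ u * Real.log (u / v) := by
  rcases hv.eq_or_lt with rfl | hv
  · have : u = 0 := le_antisymm (not_lt.mp fun h => (huv h).false) hu
    simp [this]
  · have := mul_nonneg hv.le (InformationTheory.klFun_nonneg (div_nonneg hu hv.le))
    rw [InformationTheory.klFun, mul_sub, mul_add, ← mul_assoc, mul_div_cancel₀ _ hv.ne'] at this
    linarith

lemma sum_mul_log_div_marginals_nonneg {α β γ : Type*} [Fintype α] [Fintype β] [Fintype γ]
    {q : α → β → γ → ℝ} (hq : ∀ x y z, 0 ≤ q x y z) :
    0 ≤ ∑ x, ∑ y, ∑ z, q x y z * Real.log (q x y z * (∑ x', ∑ y', q x' y' z)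
      / ((∑ y', q x y' z) * (∑ x', q x' y z))) := by
  set qXZ : α → γ → ℝ := fun x z => ∑ y, q x y z
  set qYZ : β → γ → ℝ := fun y z => ∑ x, q x y z
  set qZ : γ → ℝ := fun z => ∑ x, ∑ y, q x y z
  have hrot : ∀ f : α → β → γ → ℝ, ∑ x, ∑ y, ∑ z, f x y z = ∑ z, ∑ x, ∑ y, f x y z := fun f =>
    (Finset.sum_congr rfl fun x _ => Finset.sum_comm).trans Finset.sum_comm
  have hmass : ∑ x, ∑ y, ∑ z, (q x y z - qXZ x z * qYZ y z / qZ z) = 0 := by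
    have hXZ : ∀ z, ∑ x, qXZ x z = qZ z := fun z => rfl
    have hYZ : ∀ z, ∑ y, qYZ y z = qZ z := fun z => Finset.sum_comm
    simp only [Finset.sum_sub_distrib, hrot, ← Finset.sum_div, ← Finset.sum_mul_sum, hXZ, hYZ,
      mul_self_div_self]
    exact sub_self _
  refine hmass.symm.le.trans <| Finset.sum_le_sum fun x _ => Finset.sum_le_sum fun y _ =>
    Finset.sum_le_sum fun z _ => ?_
  have hXZ : q x y z ≤ qXZ x z :=
    Finset.single_le_sum (fun y _ => hq x y z) (Finset.mem_univ y)
  have hYZ : q x y z ≤ qYZ y z :=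
    Finset.single_le_sum (fun x _ => hq x y z) (Finset.mem_univ x)
  have hZ : qXZ x z ≤ qZ z := Finset.single_le_sum
    (fun x _ => Finset.sum_nonneg fun y _ => hq x y z) (Finset.mem_univ x)
  have hv : 0 ≤ qXZ x z * qYZ y z / qZ z :=
    div_nonneg (mul_nonneg ((hq x y z).trans hXZ) ((hq x y z).trans hYZ))
      (((hq x y z).trans hXZ).trans hZ)
  have hv_pos : 0 < q x y z → 0 < qXZ x z * qYZ y z / qZ z := fun hpos =>
    div_pos (mul_pos (hpos.trans_le hXZ) (hpos.trans_le hYZ)) ((hpos.trans_le hXZ).trans_le hZ)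
  calc q x y z - qXZ x z * qYZ y z / qZ z
      ≤ q x y z * Real.log (q x y z / (qXZ x z * qYZ y z / qZ z)) :=
        sub_le_mul_log_div (hq x y z) hv hv_pos
    _ = _ := by rw [div_div_eq_mul_div]

section

variable {p : Ω → ℝ}

lemma pr_nonneg {α : Type*} (hp : ∀ ω, 0 ≤ p ω) (X : Ω → α) (x : α) : 0 ≤ pr p X x :=
  Finset.sum_nonneg fun _ _ => Set.indicator_nonneg (fun _ _ => hp _) _

lemma le_pr_self {α : Type*} (hp : ∀ ω, 0 ≤ p ω) (X : Ω → α) (ω : Ω) : p ω ≤ pr p X (X ω) := by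
  have h := Finset.single_le_sum (fun ω' _ => Set.indicator_nonneg (fun _ _ => hp _) ω')
    (Finset.mem_univ ω) (f := Set.indicator {ω' | X ω' = X ω} p)
  rwa [Set.indicator_of_mem (show ω ∈ {ω' | X ω' = X ω} from rfl)] at h

lemma pr_congr {α β : Type*} {X : Ω → α} {Y : Ω → β} {x : α} {y : β}
    (h : ∀ ω, X ω = x ↔ Y ω = y) : pr p X x = pr p Y y := by
  rw [pr, pr, show {ω | X ω = x} = {ω | Y ω = y} from Set.ext h]

lemma pr_eq_sum_pr_pair {α β : Type*} [Fintype α] (X : Ω → α) (Y : Ω → β) (y : β) :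
    pr p Y y = ∑ x, pr p (pair X Y) (x, y) := by
  classical
  simp only [pr, pair, Set.indicator_apply, Set.mem_ofPred_eq, Prod.mk.injEq]
  rw [Finset.sum_comm]
  refine Finset.sum_congr rfl fun ω _ => ?_
  simp [ite_and]

lemma sum_pr_mul {α : Type*} [Fintype α] (X : Ω → α) (f : α → ℝ) :
    ∑ x, pr p X x * f x = ∑ ω, p ω * f (X ω) := by
  classical
  simp only [pr, Set.indicator_apply, Set.mem_ofPred_eq, Finset.sum_mul]
  rw [Finset.sum_comm]
  refine Finset.sum_congr rfl fun ω _ => ?_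
  simp

omit [Fintype Ω] in
@[simp] lemma pair_apply {α β : Type*} (X : Ω → α) (Y : Ω → β) (ω : Ω) :
    pair X Y ω = (X ω, Y ω) := rfl

lemma sum_pr_pair_mul {α β : Type*} [Fintype α] [Fintype β] (X : Ω → α) (Y : Ω → β)
    (f : α → β → ℝ) :
    ∑ x, ∑ y, pr p (pair X Y) (x, y) * f x y = ∑ ω, p ω * f (X ω) (Y ω) := by
  simpa only [Fintype.sum_prod_type, pair_apply] using
    sum_pr_mul (p := p) (pair X Y) fun t => f t.1 t.2

lemma sum_pr_triple_mul {α β γ : Type*} [Fintype α] [Fintype β] [Fintype γ]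
    (X : Ω → α) (Y : Ω → β) (Z : Ω → γ) (f : α → β → γ → ℝ) :
    ∑ x, ∑ y, ∑ z, pr p (pair X (pair Y Z)) (x, y, z) * f x y z
      = ∑ ω, p ω * f (X ω) (Y ω) (Z ω) := by
  simpa only [Fintype.sum_prod_type, pair_apply] using
    sum_pr_mul (p := p) (pair X (pair Y Z)) fun t => f t.1 t.2.1 t.2.2

lemma ent_eq_sum {α : Type*} [Fintype α] (X : Ω → α) :
    ent p X = -∑ ω, p ω * Real.log (pr p X (X ω)) := by
  rw [ent, sum_pr_mul X fun x => Real.log (pr p X x)]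

lemma ent_congr {α β : Type*} [Fintype α] [Fintype β] {X : Ω → α} {Y : Ω → β}
    (h : ∀ ω ω', X ω' = X ω ↔ Y ω' = Y ω) : ent p X = ent p Y := by
  simp only [ent_eq_sum, pr_congr (h _)]

lemma ent_pair_comm {α β : Type*} [Fintype α] [Fintype β] (X : Ω → α) (Y : Ω → β) :
    ent p (pair X Y) = ent p (pair Y X) :=
  ent_congr fun _ _ => by simp only [pair_apply, Prod.mk.injEq, and_comm]

lemma mi_eq_ent (hp : ∀ ω, 0 ≤ p ω) {α β : Type*} [Fintype α] [Fintype β]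
    (X : Ω → α) (Y : Ω → β) : mi p X Y = ent p X + ent p Y - ent p (pair X Y) := by
  have hω : ∀ ω, p ω * Real.log (pr p (pair X Y) (X ω, Y ω) / (pr p X (X ω) * pr p Y (Y ω)))
      = p ω * Real.log (pr p (pair X Y) (X ω, Y ω))
        - p ω * Real.log (pr p X (X ω)) - p ω * Real.log (pr p Y (Y ω)) := by
    intro ω
    rcases (hp ω).eq_or_lt with h0 | hpos
    · simp [← h0]
    have hXY : 0 < pr p (pair X Y) (X ω, Y ω) := hpos.trans_le (le_pr_self hp (pair X Y) ω)
    have hX := hpos.trans_le (le_pr_self hp X ω)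
    have hY := hpos.trans_le (le_pr_self hp Y ω)
    rw [Real.log_div hXY.ne' (mul_pos hX hY).ne', Real.log_mul hX.ne' hY.ne']
    ring
  simp only [mi, sum_pr_pair_mul, hω, ent_eq_sum, pair_apply, Finset.sum_sub_distrib]
  ring

lemma cmi_eq_ent (hp : ∀ ω, 0 ≤ p ω) {α β γ : Type*} [Fintype α] [Fintype β] [Fintype γ]
    (X : Ω → α) (Y : Ω → β) (Z : Ω → γ) :
    cmi p X Y Z = ent p (pair X Z) + ent p (pair Y Z) - ent p (pair X (pair Y Z)) - ent p Z := by
  have hω : ∀ ω, p ω * Real.log (pr p (pair X (pair Y Z)) (X ω, Y ω, Z ω) * pr p Z (Z ω)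
        / (pr p (pair X Z) (X ω, Z ω) * pr p (pair Y Z) (Y ω, Z ω)))
      = p ω * Real.log (pr p (pair X (pair Y Z)) (X ω, Y ω, Z ω)) + p ω * Real.log (pr p Z (Z ω))
        - p ω * Real.log (pr p (pair X Z) (X ω, Z ω))
        - p ω * Real.log (pr p (pair Y Z) (Y ω, Z ω)) := by
    intro ω
    rcases (hp ω).eq_or_lt with h0 | hpos
    · simp [← h0]
    have hXYZ : 0 < pr p (pair X (pair Y Z)) (X ω, Y ω, Z ω) :=
      hpos.trans_le (le_pr_self hp _ ω)
    have hZ := hpos.trans_le (le_pr_self hp Z ω)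
    have hXZ : 0 < pr p (pair X Z) (X ω, Z ω) := hpos.trans_le (le_pr_self hp _ ω)
    have hYZ : 0 < pr p (pair Y Z) (Y ω, Z ω) := hpos.trans_le (le_pr_self hp _ ω)
    rw [Real.log_div (mul_pos hXYZ hZ).ne' (mul_pos hXZ hYZ).ne', Real.log_mul hXYZ.ne' hZ.ne',
      Real.log_mul hXZ.ne' hYZ.ne']
    ring
  simp only [cmi, sum_pr_triple_mul, hω, ent_eq_sum, pair_apply, Finset.sum_sub_distrib,
    Finset.sum_add_distrib]
  ring

lemma cmi_nonneg (hp : ∀ ω, 0 ≤ p ω) {α β γ : Type*} [Fintype α] [Fintype β] [Fintype γ]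
    (X : Ω → α) (Y : Ω → β) (Z : Ω → γ) : 0 ≤ cmi p X Y Z := by
  have hXZ : ∀ x z, pr p (pair X Z) (x, z) = ∑ y, pr p (pair X (pair Y Z)) (x, y, z) := by
    intro x z
    rw [pr_eq_sum_pr_pair Y]
    exact Finset.sum_congr rfl fun y _ =>
      pr_congr fun ω => by simp only [pair_apply, Prod.mk.injEq]; tauto
  have hYZ : ∀ y z, pr p (pair Y Z) (y, z) = ∑ x, pr p (pair X (pair Y Z)) (x, y, z) :=
    fun y z => pr_eq_sum_pr_pair X _ _
  have hZ : ∀ z, pr p Z z = ∑ x, ∑ y, pr p (pair X (pair Y Z)) (x, y, z) := fun z => by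
    simp only [pr_eq_sum_pr_pair X Z z, hXZ]
  simp only [cmi, hXZ, hYZ, hZ]
  exact sum_mul_log_div_marginals_nonneg fun x y z => pr_nonneg hp _ _

lemma cmi_eq_zero_of_condIndep {α β γ : Type*} [Fintype α] [Fintype β] [Fintype γ]
    {X : Ω → α} {Y : Ω → β} {Z : Ω → γ} (h : CondIndep p X Y Z) : cmi p X Y Z = 0 :=
  Finset.sum_eq_zero fun x _ => Finset.sum_eq_zero fun y _ => Finset.sum_eq_zero fun z _ => by
    rw [h x y z, Real.log_div_self, mul_zero]

end

/-- under the Wyner Markov conditions, I(X;Ẑ₁;Ẑ₂) ≤ I(X;U). -/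
theorem interaction_le_wyner
    {α₁ α₂ β₁ β₂ υ : Type*} [Fintype α₁] [Fintype α₂] [Fintype β₁] [Fintype β₂] [Fintype υ]
    (p : Ω → ℝ) (hp : IsProb p)
    (X₁ : Ω → α₁) (X₂ : Ω → α₂) (Z₁ : Ω → β₁) (Z₂ : Ω → β₂) (U : Ω → υ)
    (hmc1 : CondIndep p Z₁ Z₂ U)
    (hmc2 : CondIndep p (pair X₁ X₂) U (pair Z₁ Z₂)) :
    ii p (pair X₁ X₂) Z₁ Z₂ ≤ mi p (pair X₁ X₂) U := by
  obtain ⟨hp, -⟩ := hp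
  set X := pair X₁ X₂
  have hXUZ₁ := cmi_nonneg hp X U Z₁
  have hXUZ₂ := cmi_nonneg hp X U Z₂
  have hZ₁Z₂XU := cmi_nonneg hp Z₁ Z₂ (pair X U)
  have hZ₁Z₂U := cmi_eq_zero_of_condIndep hmc1
  have hXUZ := cmi_eq_zero_of_condIndep hmc2
  rw [cmi_eq_ent hp] at hXUZ₁ hXUZ₂ hZ₁Z₂XU hZ₁Z₂U hXUZ
  rw [ii, mi_eq_ent hp, mi_eq_ent hp, cmi_eq_ent hp]
  have e₁ : ent p (pair X (pair U Z₁)) = ent p (pair Z₁ (pair X U)) :=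
    ent_congr fun _ _ => by simp only [pair_apply, Prod.mk.injEq]; tauto
  have e₂ : ent p (pair X (pair U Z₂)) = ent p (pair Z₂ (pair X U)) :=
    ent_congr fun _ _ => by simp only [pair_apply, Prod.mk.injEq]; tauto
  have e₃ : ent p (pair Z₁ (pair Z₂ (pair X U))) = ent p (pair X (pair U (pair Z₁ Z₂))) :=
    ent_congr fun _ _ => by simp only [pair_apply, Prod.mk.injEq]; tauto
  have e₄ : ent p (pair U (pair Z₁ Z₂)) = ent p (pair Z₁ (pair Z₂ U)) :=
    ent_congr fun _ _ => by simp only [pair_apply, Prod.mk.injEq]; tauto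
  linarith [ent_pair_comm (p := p) U Z₁, ent_pair_comm (p := p) U Z₂]

end GW
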